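/- arXiv:1610.08568 — 2 statements merged into one kernel-verified Lean document; each statement's English description precedes it below -/
import Mathlib

section
/- Jensen's surrogate majorization: let f : ℝ → ℝ be convex, let h ∈ ℝ^N with hⱼ ≥ 0, and let r ∈ ℝ^N with rⱼ > 0 and ∑ⱼ rⱼ ≤ 1 and rⱼ > 0 whenever hⱼ > 0. Then for all x, x̂ ∈ ℝ^N, f(⟨h, x⟩) ≤ ∑ⱼ rⱼ · f((hⱼ/rⱼ)(xⱼ − x̂ⱼ) + ⟨h, x̂⟩) + (1 − ∑ⱼ rⱼ)·f(⟨h, x̂⟩), with equality when x = x̂. -/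
/-! Write `⟨h, x⟩ = ⟨h, x̂⟩ + ∑ⱼ hⱼ (xⱼ - x̂ⱼ)` and split off the weights: this point is the
combination `(1 - ∑ⱼ rⱼ) • ⟨h, x̂⟩ + ∑ⱼ rⱼ • ((hⱼ / rⱼ) (xⱼ - x̂ⱼ) + ⟨h, x̂⟩)`, whose coefficients
are nonnegative and sum to `1`, so Jensen's inequality for `f` gives the surrogate bound. At
`x = x̂` every point of the combination is `⟨h, x̂⟩` itself. -/

open Finset

theorem one_sub_sum_smul_add_sum_smul_inv_smul_add {𝕜 E ι : Type*} [DivisionRing 𝕜]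
    [AddCommGroup E] [Module 𝕜 E] {t : Finset ι} {r : ι → 𝕜} {a : ι → E} {c : E}
    (hr : ∀ j ∈ t, r j ≠ 0) :
    (1 - ∑ j ∈ t, r j) • c + ∑ j ∈ t, r j • ((r j)⁻¹ • a j + c) = c + ∑ j ∈ t, a j := by
  have hterm : ∀ j ∈ t, r j • ((r j)⁻¹ • a j + c) = a j + r j • c := fun j hj => by
    rw [smul_add, smul_inv_smul₀ (hr j hj)]
  rw [sum_congr rfl hterm, sum_add_distrib, ← sum_smul, sub_smul, one_smul]
  abel

theorem ConvexOn.map_add_sum_le_sum_smul_map_inv_smul_add {𝕜 E β ι : Type*} [Field 𝕜]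
    [LinearOrder 𝕜] [IsStrictOrderedRing 𝕜] [AddCommGroup E] [AddCommGroup β] [PartialOrder β]
    [IsOrderedAddMonoid β] [Module 𝕜 E] [Module 𝕜 β] [IsStrictOrderedModule 𝕜 β] {s : Set E}
    {f : E → β} {t : Finset ι} {r : ι → 𝕜} {a : ι → E} {c : E} (hf : ConvexOn 𝕜 s f)
    (hr : ∀ j ∈ t, 0 < r j) (hrsum : ∑ j ∈ t, r j ≤ 1) (hc : c ∈ s)
    (hmem : ∀ j ∈ t, (r j)⁻¹ • a j + c ∈ s) :
    f (c + ∑ j ∈ t, a j) ≤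
      ∑ j ∈ t, r j • f ((r j)⁻¹ • a j + c) + (1 - ∑ j ∈ t, r j) • f c := by
  rw [← one_sub_sum_smul_add_sum_smul_inv_smul_add fun j hj => (hr j hj).ne']
  exact (hf.map_add_sum_le (fun j hj => (hr j hj).le) (sub_add_cancel _ _) hmem
    (sub_nonneg.2 hrsum) hc).trans_eq (add_comm _ _)

theorem stmt_6_general (N : ℕ) (f : ℝ → ℝ) (hf : ConvexOn ℝ Set.univ f)
    (h r : Fin N → ℝ) (hr : ∀ j, 0 < r j)
    (hrsum : ∑ j, r j ≤ 1) (x xhat : Fin N → ℝ) :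
    f (∑ j, h j * x j) ≤
        (∑ j, r j * f ((h j / r j) * (x j - xhat j) + ∑ j', h j' * xhat j')) +
          (1 - ∑ j, r j) * f (∑ j, h j * xhat j) ∧
      (x = xhat →
        f (∑ j, h j * x j) =
          (∑ j, r j * f ((h j / r j) * (x j - xhat j) + ∑ j', h j' * xhat j')) +
            (1 - ∑ j, r j) * f (∑ j, h j * xhat j)) := by
  refine ⟨?_, ?_⟩
  · have hsplit : ∑ j, h j * x j = ∑ j, h j * xhat j + ∑ j, h j * (x j - xhat j) := by
      rw [← sum_add_distrib]
      exact sum_congr rfl fun j _ => by ring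
    have hdiv : ∀ j, h j / r j * (x j - xhat j) = (r j)⁻¹ * (h j * (x j - xhat j)) :=
      fun j => by ring
    simpa only [hsplit, hdiv, smul_eq_mul] using
      hf.map_add_sum_le_sum_smul_map_inv_smul_add (fun j _ => hr j) hrsum (Set.mem_univ _)
        fun j _ => Set.mem_univ _
  · rintro rfl
    simp only [sub_self, mul_zero, zero_add, ← sum_mul]
    ring

theorem stmt_6 (N : ℕ) (f : ℝ → ℝ) (hf : ConvexOn ℝ Set.univ f)
    (h r : Fin N → ℝ) (hh : ∀ j, 0 ≤ h j) (hr : ∀ j, 0 < r j)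
    (hrsum : ∑ j, r j ≤ 1) (x xhat : Fin N → ℝ) :
    f (∑ j, h j * x j) ≤
        (∑ j, r j * f ((h j / r j) * (x j - xhat j) + ∑ j', h j' * xhat j')) +
          (1 - ∑ j, r j) * f (∑ j, h j * xhat j) ∧
      (x = xhat →
        f (∑ j, h j * x j) =
          (∑ j, r j * f ((h j / r j) * (x j - xhat j) + ∑ j', h j' * xhat j')) +
            (1 - ∑ j, r j) * f (∑ j, h j * xhat j)) :=
  stmt_6_general N f hf h r hr hrsum x xhat
end

section
/- Closed-form surrogate minimizer: for constants b > 0, b̂ > 0, Z > 0, and x̂ ∈ ℝ, the function g(x) = b(x − x̂) + (b̂/Z)·exp(−Z(x − x̂)) on the domain x ≥ 0 attains its minimum at x* = max(0, x̂ − (1/Z)·log(b/b̂)). -/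
theorem stmt_8 (b bhat Z xhat : ℝ) (hb : 0 < b) (hbhat : 0 < bhat) (hZ : 0 < Z) (hxhat : 0 ≤ xhat) :
    IsMinOn (fun x : ℝ => b * (x - xhat) + (bhat / Z) * Real.exp (-Z * (x - xhat)))
      {x : ℝ | 0 ≤ x} (max 0 (xhat - (1 / Z) * Real.log (b / bhat))) := by
  set m := max 0 (xhat - (1 / Z) * Real.log (b / bhat)) with hmdef
  rw [isMinOn_iff]
  intro x hx
  simp only [Set.mem_setOf_eq] at hx
  set c := bhat * Real.exp (-Z * (m - xhat)) with hc
  have hA : (0:ℝ) < Real.exp (-Z * (m - xhat)) := Real.exp_pos _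
  have hsplit : Real.exp (-Z * (x - xhat))
      = Real.exp (-Z * (m - xhat)) * Real.exp (-Z * (x - m)) := by
    rw [← Real.exp_add]; ring_nf
  have hexp : -Z * (x - m) + 1 ≤ Real.exp (-Z * (x - m)) := Real.add_one_le_exp _
  have hkey : (x - m) * (b - c) ≥ 0 := by
    by_cases h0 : 0 ≤ xhat - (1 / Z) * Real.log (b / bhat)
    · have hm : m = xhat - (1 / Z) * Real.log (b / bhat) := max_eq_right h0
      have hcb : c = b := by
        rw [hc, hm]
        have : -Z * (xhat - (1 / Z) * Real.log (b / bhat) - xhat) = Real.log (b / bhat) := by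
          field_simp; ring
        rw [this, Real.exp_log (div_pos hb hbhat)]
        field_simp
      rw [hcb]; simp
    · have hm : m = 0 := max_eq_left (le_of_lt (lt_of_not_ge h0))
      push_neg at h0
      have hlt : Z * xhat < Real.log (b / bhat) := by
        have := (sub_neg.mp h0)
        have h1 : xhat < (1 / Z) * Real.log (b / bhat) := this
        calc Z * xhat < Z * ((1 / Z) * Real.log (b / bhat)) := by
              exact mul_lt_mul_of_pos_left h1 hZ
          _ = Real.log (b / bhat) := by field_simp
      have hce : c = bhat * Real.exp (Z * xhat) := by rw [hc, hm]; ring_nf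
      have hcb : c < b := by
        rw [hce]
        have := Real.exp_lt_exp.mpr hlt
        rw [Real.exp_log (div_pos hb hbhat)] at this
        calc bhat * Real.exp (Z * xhat) < bhat * (b / bhat) :=
              mul_lt_mul_of_pos_left this hbhat
          _ = b := by field_simp
      have hxm : 0 ≤ x - m := by rw [hm]; simpa using hx
      exact mul_nonneg hxm (sub_pos.mpr hcb).le
  -- main inequality
  have hbZ : 0 < bhat / Z := div_pos hbhat hZ
  rw [hsplit]
  have h2 : bhat / Z * Real.exp (-Z * (m - xhat)) * (-Z * (x - m) + 1)
      ≤ bhat / Z * (Real.exp (-Z * (m - xhat)) * Real.exp (-Z * (x - m))) := by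
    have := mul_le_mul_of_nonneg_left hexp (le_of_lt (mul_pos hbZ hA))
    linarith [this]
  have h3 : bhat / Z * Real.exp (-Z * (m - xhat)) * (-Z * (x - m) + 1)
      = bhat / Z * Real.exp (-Z * (m - xhat)) - c * (x - m) := by
    rw [hc]; field_simp; ring
  nlinarith [h2, h3, hkey]
end
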